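/- Berge's theorem: a matching M in a finite simple graph G is a maximum matching if and only if G contains no M-augmenting path. -/

import Mathlib

/-- `M` is a matching: a set of pairwise non-incident edges, viewed as a
subgraph (a graph `M ≤ G` in which every vertex has at most one neighbor). -/
def IsMatching {V : Type*} (M : SimpleGraph V) : Prop :=
  ∀ v u w : V, M.Adj v u → M.Adj v w → u = w

/-- `v` is unmatched by `M`. -/
def Unmatched {V : Type*} (M : SimpleGraph V) (v : V) : Prop :=
  ∀ u : V, ¬ M.Adj v u

/-- `p` is an `M`-augmenting path in `G`: a path between two distinct
`M`-unmatched vertices whose edges alternate, starting (and hence ending)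
with a non-matching edge. -/
def IsAugPath {V : Type*} (G M : SimpleGraph V) {u v : V} (p : G.Walk u v) : Prop :=
  p.IsPath ∧ Unmatched M u ∧ Unmatched M v ∧ u ≠ v ∧
    ∀ (i : ℕ) (h : i < p.edges.length), (p.edges[i] ∈ M.edgeSet ↔ i % 2 = 1)

/-!
Switching an augmenting path `p` (exchanging the edges of `p` in and out of `M`) gives a matching
with one more edge. Conversely, suppose `M` has no augmenting path and let `M'` be another matching.
From a vertex `u` covered by `M'` but not by `M`, follow a longest path alternating between edges of
`M'` and of `M`. It cannot end after an `M'`-edge, since it would be augmenting or could be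
extended, so it ends after an `M`-edge at a vertex `w` not covered by `M'`. Switching `M'` along
this even path keeps its size and trades `u` for `w` in its support. By induction on the number of
vertices covered by `M'` but not by `M`, we may thus assume that the support of `M'` lies in that
of `M`; as a matching covers twice as many vertices as it has edges, `|M'| ≤ |M|`.
-/

section

open SimpleGraph Walk

variable {V : Type*}

section Matching

variable {N N' : SimpleGraph V} {u a b x : V}

theorem unmatched_iff_notMem_support : Unmatched N x ↔ x ∉ N.support := by
  simp [Unmatched, mem_support]

theorem Unmatched.mono (h : N' ≤ N) (hx : Unmatched N x) : Unmatched N' x :=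
  fun y hy => hx y (h hy)

theorem IsMatching.mono (h : N' ≤ N) (hN : IsMatching N) : IsMatching N' :=
  fun v _ _ hu hw => hN v _ _ (h hu) (h hw)

theorem unmatched_sup_edge_iff (hua : u ≠ a) :
    Unmatched (N ⊔ edge u a) x ↔ Unmatched N x ∧ x ≠ u ∧ x ≠ a := by
  constructor
  · intro h
    refine ⟨fun y hy => h y (Or.inl hy), ?_, ?_⟩ <;> rintro rfl
    · exact h a (Or.inr ((edge_adj ..).2 ⟨Or.inl ⟨rfl, rfl⟩, hua⟩))
    · exact h u (Or.inr ((edge_adj ..).2 ⟨Or.inr ⟨rfl, rfl⟩, hua.symm⟩))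
  · rintro ⟨hx, hxu, hxa⟩ y (hy | hy)
    · exact hx y hy
    · rcases ((edge_adj ..).1 hy).1 with h | h
      exacts [hxu h.1, hxa h.1]

theorem IsMatching.sup_edge (hN : IsMatching N) (hu : Unmatched N u) (ha : Unmatched N a) :
    IsMatching (N ⊔ edge u a) := by
  simp only [IsMatching, sup_adj, edge_adj]
  grind [IsMatching, Unmatched]

theorem IsMatching.unmatched_sdiff_edge (hN : IsMatching N) (hab : N.Adj a b) :
    Unmatched (N \ edge a b) a := by
  intro y hy
  rw [sdiff_adj, hN a y b hy.1 hab, edge_adj] at hy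
  exact hy.2 ⟨Or.inl ⟨rfl, rfl⟩, hab.ne⟩

theorem ncard_edgeSet_sup_edge [Finite V] (hu : Unmatched N u) (hua : u ≠ a) :
    (N ⊔ edge u a).edgeSet.ncard = N.edgeSet.ncard + 1 := by
  rw [edgeSet_sup, edgeSet_edge_of_ne hua, Set.union_singleton]
  exact Set.ncard_insert_of_notMem (hu a)

theorem ncard_edgeSet_sdiff_edge [Finite V] (hab : N.Adj a b) :
    (N \ edge a b).edgeSet.ncard + 1 = N.edgeSet.ncard := by
  rw [edgeSet_sdiff, edgeSet_edge_of_ne hab.ne]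
  exact Set.ncard_sdiff_singleton_add_one hab

theorem IsMatching.ncard_support [Fintype V] (hN : IsMatching N) :
    N.support.ncard = 2 * N.edgeSet.ncard := by
  classical
  have hdeg : ∀ v, N.degree v = if v ∈ N.support then 1 else 0 := by
    intro v
    rw [← card_neighborFinset_eq_degree]
    split_ifs with hv
    · obtain ⟨w, hw⟩ := hv
      exact Finset.card_eq_one.2 ⟨w, Finset.eq_singleton_iff_unique_mem.2
        ⟨by simpa using hw, fun y hy => hN v y w (by simpa using hy) hw⟩⟩
    · exact Finset.card_eq_zero.2 <| Finset.eq_empty_of_forall_notMem fun y hy =>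
        hv ⟨y, by simpa using hy⟩
  rw [← coe_edgeFinset, Set.ncard_coe_finset, ← sum_degrees_eq_twice_card_edges,
    Finset.sum_congr rfl fun v _ => hdeg v, Finset.sum_boole, Nat.cast_id,
    Set.ncard_eq_toFinset_card', Set.toFinset_card, Fintype.card_subtype]

end Matching

namespace SimpleGraph.Walk

variable {G N : SimpleGraph V} {u v w : V} {p : G.Walk u v}

def Alternates (N : SimpleGraph V) (r : ℕ) (p : G.Walk u v) : Prop :=
  ∀ i (h : i < p.edges.length), p.edges[i] ∈ N.edgeSet ↔ i % 2 = r

theorem alternates_cons_iff {r : ℕ} (hr : r < 2) (h : G.Adj u v) (p : G.Walk v w) :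
    (cons h p).Alternates N r ↔ (N.Adj u v ↔ r = 0) ∧ p.Alternates N (1 - r) := by
  simp only [Alternates, edges_cons, List.length_cons]
  constructor
  · intro H
    refine ⟨by simpa [eq_comm] using H 0 (by simp), fun i hi => ?_⟩
    have := H (i + 1) (by simpa using hi)
    rw [List.getElem_cons_succ] at this
    rw [this]
    omega
  · rintro ⟨h0, H⟩ (_ | i) hi
    · simpa [eq_comm] using h0
    · rw [List.getElem_cons_succ, H i (by omega)]
      omega

theorem Alternates.length_mod_two (hp : p.Alternates N 1) (hv : Unmatched N v) (huv : u ≠ v) :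
    p.length % 2 = 1 := by
  have hlen : 0 < p.length := Nat.pos_of_ne_zero fun h => huv (eq_of_length_eq_zero h)
  by_contra hodd
  have hlast := (hp (p.length - 1) (by simp; omega)).2 (by omega)
  rw [getElem_edges, Nat.sub_add_cancel hlen, getVert_length, SimpleGraph.mem_edgeSet] at hlast
  exact hv _ hlast.symm

theorem Alternates.sdiff_edge_sup_edge {r : ℕ} {a b c : V} (hp : p.Alternates N r)
    (ha : a ∉ p.support) : p.Alternates (N \ edge a b ⊔ edge c a) r := by
  have hagree : ∀ e ∈ p.edges, e ∈ (N \ edge a b ⊔ edge c a).edgeSet ↔ e ∈ N.edgeSet := by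
    intro e he
    induction e using Sym2.ind with | _ x y => ?_
    have hxa : x ≠ a := fun h => ha (h ▸ p.fst_mem_support_of_mem_edges he)
    have hya : y ≠ a := fun h => ha (h ▸ p.snd_mem_support_of_mem_edges he)
    simp [hxa, hya]
  exact fun i hi => (hagree _ (List.getElem_mem hi)).trans (hp i hi)

end SimpleGraph.Walk

/-- `N'` is `N` with the edges of `p` switched in and out of it. -/
theorem exists_isMatching_switch [Finite V] {G : SimpleGraph V} :
    ∀ {N : SimpleGraph V} {u v : V} (p : G.Walk u v), N ≤ G → IsMatching N → p.IsPath →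
      Unmatched N u → p.Alternates N 1 → (p.length % 2 = 1 → Unmatched N v) →
      ∃ N' ≤ G, IsMatching N' ∧ N'.edgeSet.ncard = N.edgeSet.ncard + p.length % 2 ∧
        (∀ x, x ≠ u → x ≠ v → Unmatched N x → Unmatched N' x) ∧
        (p.length % 2 = 0 → Unmatched N' v)
  | N, _, _, .nil, hNG, hN, _, hu, _, _ => ⟨N, hNG, hN, rfl, fun _ _ _ hx => hx, fun _ => hu⟩
  | N, u, a, .cons hua .nil, hNG, hN, _, hu, _, ha => by
    refine ⟨N ⊔ edge u a, sup_le hNG ((edge_le_iff G).2 (Or.inr hua)),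
      hN.sup_edge hu (ha rfl), ncard_edgeSet_sup_edge hu hua.ne,
      fun x hxu hxa hx => (unmatched_sup_edge_iff hua.ne).2 ⟨hx, hxu, hxa⟩, by simp⟩
  | N, u, v, .cons (v := a) hua (.cons (v := b) hab q), hNG, hN, hp, hu, hpN, hv => by
    simp only [cons_isPath_iff, support_cons, List.mem_cons, not_or] at hp
    obtain ⟨⟨hq, haq⟩, -, huq⟩ := hp
    rw [alternates_cons_iff (by norm_num), alternates_cons_iff (by norm_num)] at hpN
    obtain ⟨-, habN, hqN⟩ : ¬N.Adj u a ∧ N.Adj a b ∧ q.Alternates N 1 := by simpa using hpN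
    -- switch the first two edges of `p`, then the rest of `p` recursively
    set N₁ := N \ edge a b ⊔ edge u a
    have hN₁ : IsMatching N₁ :=
      (hN.mono sdiff_le).sup_edge (hu.mono sdiff_le) (hN.unmatched_sdiff_edge habN)
    have hunm : ∀ x, x ≠ u → x ≠ a → Unmatched N x → Unmatched N₁ x :=
      fun x hxu hxa hx => (unmatched_sup_edge_iff hua.ne).2 ⟨hx.mono sdiff_le, hxu, hxa⟩
    have hb : Unmatched N₁ b := by
      refine (unmatched_sup_edge_iff hua.ne).2 ⟨?_, ?_, hab.ne.symm⟩
      · rw [edge_comm]; exact hN.unmatched_sdiff_edge habN.symm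
      · rintro rfl; exact huq q.start_mem_support
    obtain ⟨N', hN'G, hN', hcard, hunm', hv'⟩ := exists_isMatching_switch q
      (sup_le (sdiff_le.trans hNG) ((edge_le_iff G).2 (Or.inr hua))) hN₁ hq hb
      (hqN.sdiff_edge_sup_edge haq)
      fun hodd => hunm v (fun h => huq (h ▸ q.end_mem_support))
        (fun h => haq (h ▸ q.end_mem_support)) (hv (by simp; omega))
    refine ⟨N', hN'G, hN', ?_, fun x hxu hxv hx => hunm' x ?_ hxv (hunm x hxu ?_ hx), ?_⟩
    · rw [hcard, ncard_edgeSet_sup_edge (hu.mono sdiff_le) hua.ne,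
        ← ncard_edgeSet_sdiff_edge habN, length_cons, length_cons]
      omega
    · rintro rfl; exact hx a habN.symm
    · rintro rfl; exact hx b habN
    · intro heven
      simp only [length_cons] at heven
      exact hv' (by omega)

namespace SimpleGraph.Walk

variable {G A B : SimpleGraph V} {u v w : V} {q : G.Walk v u}

theorem IsPath.notMem_support_of_adj (hq : q.IsPath) (hA : IsMatching A)
    (hqA : q.Alternates A 1) (hu : q.length % 2 = 1 → Unmatched A u) (hvw : A.Adj v w) :
    w ∉ q.support := by
  intro hw
  obtain ⟨j, rfl, hj⟩ := mem_support_iff_exists_getVert.mp hw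
  have hedge : ∀ k < q.length, k % 2 = 1 → A.Adj (q.getVert k) (q.getVert (k + 1)) :=
    fun k hk hk1 => by
      have := (hqA k (by simpa using hk)).2 hk1
      rwa [getElem_edges] at this
  have hstart : ∀ k ≤ q.length, q.getVert k = v → k = 0 :=
    fun k hk => (hq.getVert_eq_start_iff hk).1
  obtain ⟨k, rfl | rfl⟩ := Nat.even_or_odd' j
  · obtain rfl | hk := Nat.eq_zero_or_pos k
    · simp at hvw
    · have := hstart (2 * k - 1) (by omega)
        (hA _ _ _ (by simpa [show 2 * k - 1 + 1 = 2 * k by omega] using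
          (hedge (2 * k - 1) (by omega) (by omega)).symm) hvw.symm)
      omega
  · obtain hlt | heq := lt_or_eq_of_le hj
    · have := hstart (2 * k + 2) hlt (hA _ _ _ (hedge (2 * k + 1) hlt (by omega)) hvw.symm)
      omega
    · rw [heq, getVert_length] at hvw
      exact hu (by omega) _ hvw.symm

theorem IsPath.cons_alternates (hq : q.IsPath) (hA : IsMatching A) (hB : IsMatching B)
    (hqA : q.Alternates A 1) (hqB : q.Alternates B 0) (huA : q.length % 2 = 1 → Unmatched A u)
    (huB : q.length = 0 → Unmatched B u) (hvw : A.Adj v w) (h : G.Adj w v) :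
    (cons h q).IsPath ∧ (cons h q).Alternates A 0 ∧ (cons h q).Alternates B 1 := by
  have hw := hq.notMem_support_of_adj hA hqA huA hvw
  have hwvB : ¬B.Adj w v := by
    cases q with
    | nil => exact fun h' => huB rfl _ h'.symm
    | cons h' q' =>
      intro hwv
      have hvx := ((alternates_cons_iff (by norm_num) h' q').1 hqB).1.2 rfl
      exact hw (by rw [hB _ _ _ hwv.symm hvx]; simp)
  refine ⟨(cons_isPath_iff h q).2 ⟨hq, hw⟩, (alternates_cons_iff (by norm_num) h q).2
    ⟨iff_of_true hvw.symm rfl, hqA⟩, (alternates_cons_iff (by norm_num) h q).2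
    ⟨iff_of_false hwvB (by norm_num), hqB⟩⟩

end SimpleGraph.Walk

section Berge

variable [Fintype V] {G M M' : SimpleGraph V}

theorem IsAugPath.exists_isMatching_ncard_eq_add_one (hMG : M ≤ G) (hM : IsMatching M)
    {u v : V} {p : G.Walk u v} (hp : IsAugPath G M p) :
    ∃ M' ≤ G, IsMatching M' ∧ M'.edgeSet.ncard = M.edgeSet.ncard + 1 := by
  obtain ⟨hp, hu, hv, huv, hpM⟩ := hp
  obtain ⟨M', hM'G, hM', hcard, -⟩ := exists_isMatching_switch p hMG hM hp hu hpM fun _ => hv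
  exact ⟨M', hM'G, hM', by rw [hcard, Walk.Alternates.length_mod_two hpM hv huv]⟩

theorem exists_forall_length_le_of_isPath {u : V} (P : ∀ x, G.Walk x u → Prop)
    (hP : ∀ x (q : G.Walk x u), P x q → q.IsPath) (h₀ : P u .nil) :
    ∃ (v : V) (q : G.Walk v u), P v q ∧
      ∀ (x : V) (q' : G.Walk x u), P x q' → q'.length ≤ q.length := by
  let S := {n | ∃ (x : V) (q : G.Walk x u), P x q ∧ q.length = n}
  have hS : BddAbove S :=
    ⟨Fintype.card V, by rintro _ ⟨x, q, hq, rfl⟩; exact (hP x q hq).length_lt.le⟩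
  obtain ⟨v, q, hq, hlen⟩ := Nat.sSup_mem (s := S) ⟨0, u, .nil, h₀, rfl⟩ hS
  exact ⟨v, q, hq, fun x q' hq' => hlen ▸ le_csSup hS ⟨x, q', hq', rfl⟩⟩

theorem exists_alternates_of_not_isAugPath (hMG : M ≤ G) (hM'G : M' ≤ G) (hM : IsMatching M)
    (hM' : IsMatching M') (hno : ¬∃ (u v : V) (p : G.Walk u v), IsAugPath G M p) {u : V}
    (hu : Unmatched M u) (hu' : ¬Unmatched M' u) :
    ∃ (w : V) (q : G.Walk w u), q.IsPath ∧ q.Alternates M' 1 ∧ q.length % 2 = 0 ∧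
      Unmatched M' w ∧ ¬Unmatched M w := by
  -- `q` runs from its free end back to `u`; counted from `u`, its edges lie in `M'`, `M`, `M'`, ...
  let Inv (x : V) (q : G.Walk x u) : Prop :=
    q.IsPath ∧ q.Alternates M (q.length % 2) ∧ q.Alternates M' ((q.length + 1) % 2)
  obtain ⟨v, q, ⟨hq, hqM, hqM'⟩, hmax⟩ := exists_forall_length_le_of_isPath Inv
    (fun _ _ h => h.1) ⟨.nil, by simp [Walk.Alternates]⟩
  have hext : ∀ (w : V) (h : G.Adj w v), ¬Inv w (.cons h q) := fun w h hinv => by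
    simpa using hmax w _ hinv
  rcases Nat.mod_two_eq_zero_or_one q.length with hlen | hlen
  · rw [hlen] at hqM
    rw [show (q.length + 1) % 2 = 1 by omega] at hqM'
    by_cases hv' : Unmatched M' v
    · refine ⟨v, q, hq, hqM', hlen, hv', ?_⟩
      cases q with
      | nil => exact fun _ => hu' hv'
      | cons h q' =>
        exact fun hv => hv _ (((Walk.alternates_cons_iff (by norm_num) h q').1 hqM).1.2 rfl)
    · obtain ⟨w, hvw⟩ : ∃ w, M'.Adj v w := by simpa [Unmatched] using hv'
      obtain ⟨hq₁, hqM'₁, hqM₁⟩ :=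
        hq.cons_alternates hM' hM hqM' hqM (by omega) (fun _ => hu) hvw (hM'G hvw.symm)
      refine absurd ⟨hq₁, ?_, ?_⟩ (hext w _)
      · simpa [show (q.length + 1) % 2 = 1 by omega] using hqM₁
      · simpa [show (q.length + 1 + 1) % 2 = 0 by omega] using hqM'₁
  · rw [hlen] at hqM
    rw [show (q.length + 1) % 2 = 0 by omega] at hqM'
    by_cases hv : Unmatched M v
    · refine absurd ⟨v, u, q, hq, hv, hu, ?_, hqM⟩ hno
      rintro rfl
      simp [(Walk.isPath_iff_nil.1 hq).length_eq_zero] at hlen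
    · obtain ⟨w, hvw⟩ : ∃ w, M.Adj v w := by simpa [Unmatched] using hv
      obtain ⟨hq₁, hqM₁, hqM'₁⟩ :=
        hq.cons_alternates hM hM' hqM hqM' (fun _ => hu) (by omega) hvw (hMG hvw.symm)
      refine absurd ⟨hq₁, ?_, ?_⟩ (hext w _)
      · simpa [show (q.length + 1) % 2 = 0 by omega] using hqM₁
      · simpa [show (q.length + 1 + 1) % 2 = 1 by omega] using hqM'₁

theorem ncard_edgeSet_le_of_not_isAugPath (hMG : M ≤ G) (hM : IsMatching M)
    (hno : ¬∃ (u v : V) (p : G.Walk u v), IsAugPath G M p) (hM'G : M' ≤ G)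
    (hM' : IsMatching M') : M'.edgeSet.ncard ≤ M.edgeSet.ncard := by
  induction hn : {x | Unmatched M x ∧ ¬Unmatched M' x}.ncard using Nat.strong_induction_on
    generalizing M' with
  | _ n ih =>
  obtain hS | ⟨u, hu, hu'⟩ := Set.eq_empty_or_nonempty {x | Unmatched M x ∧ ¬Unmatched M' x}
  · have hsub : M'.support ⊆ M.support := by
      intro x hx
      by_contra hxM
      have hxS : x ∈ {x | Unmatched M x ∧ ¬Unmatched M' x} :=
        ⟨unmatched_iff_notMem_support.2 hxM, fun h => unmatched_iff_notMem_support.1 h hx⟩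
      rwa [hS] at hxS
    have := Set.ncard_le_ncard hsub
    rw [hM'.ncard_support, hM.ncard_support] at this
    omega
  · obtain ⟨w, q, hq, hqM', hlen, hw', hw⟩ :=
      exists_alternates_of_not_isAugPath hMG hM'G hM hM' hno hu hu'
    obtain ⟨M'', hM''G, hM'', hcard, hunm, hu''⟩ :=
      exists_isMatching_switch q hM'G hM' hq hw' hqM' (by omega)
    have hlt : {x | Unmatched M x ∧ ¬Unmatched M'' x}.ncard < n := by
      rw [← hn]
      refine Set.ncard_lt_ncard
        ((Set.ssubset_iff_of_subset ?_).2 ⟨u, ⟨hu, hu'⟩, fun h => h.2 (hu'' hlen)⟩)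
      rintro x ⟨hx, hx''⟩
      refine ⟨hx, fun hx' => hx'' (hunm x ?_ ?_ hx')⟩
      · rintro rfl; exact hw hx
      · rintro rfl; exact hx'' (hu'' hlen)
    have := ih _ hlt hM''G hM'' rfl
    omega

end Berge

end

/-- Berge's theorem: a matching `M` in `G` is maximum iff `G` has no
`M`-augmenting path. -/
theorem berge {V : Type*} [Fintype V] (G M : SimpleGraph V)
    (hMG : M ≤ G) (hM : IsMatching M) :
    (∀ M' : SimpleGraph V, M' ≤ G → IsMatching M' →
        M'.edgeSet.ncard ≤ M.edgeSet.ncard) ↔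
      ¬ ∃ (u v : V) (p : G.Walk u v), IsAugPath G M p := by
  refine ⟨fun hmax ⟨u, v, p, hp⟩ => ?_,
    fun hno M' => ncard_edgeSet_le_of_not_isAugPath hMG hM hno⟩
  obtain ⟨M', hM'G, hM', hcard⟩ := hp.exists_isMatching_ncard_eq_add_one hMG hM
  have := hmax M' hM'G hM'
  omega
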